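/- For a, b in (0,1], the set A = (1/2 - b/4, 1/2 + a/4] satisfies f(A) = A, where f = f_{a,b}. -/

import Mathlib

noncomputable def fab (a b x : ℝ) : ℝ :=
  if x ≤ 1/2 then x * (1 + a - a * x) else x * (1 - b + b * x)

/-!
On the left branch `f x = x + a x (1 - x) ≥ x`, on the right branch `f x = x - b x (1 - x) ≤ x`,
and `x (1 - x) ≤ 1/4`; so `f` moves points of `A = (c, d]` left of `1/2` up by at most `a/4`
and those right of `1/2` down by at most `b/4`, whence `f(A) ⊆ A`. For the converse, the left branch `L` maps `(c, 1/2]` onto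
`(L c, d]` and the right branch `R` maps `(1/2, d]` onto `(c, R d]` by the intermediate value
theorem, and these cover `A` because `R d - L c = ab(a + b)/16 ≥ 0`.
-/

open Set

section

variable {a b x : ℝ}

lemma fab_of_le (hx : x ≤ 1/2) : fab a b x = x * (1 + a - a * x) := if_pos hx

lemma fab_of_gt (hx : 1/2 < x) : fab a b x = x * (1 - b + b * x) := if_neg hx.not_ge

theorem mapsTo_fab (ha : a ∈ Icc (0:ℝ) 2) (hb : b ∈ Icc (0:ℝ) 2) :
    MapsTo (fab a b) (Ioc (1/2 - b/4) (1/2 + a/4)) (Ioc (1/2 - b/4) (1/2 + a/4)) := by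
  rintro x ⟨hcx, hxd⟩
  have hx0 : 0 ≤ x * (1 - x) := mul_nonneg (by linarith [hb.2]) (by linarith [ha.2])
  have hx4 : x * (1 - x) ≤ 1/4 := by nlinarith [sq_nonneg (x - 1/2)]
  rcases le_or_gt x (1/2) with hx | hx
  · rw [fab_of_le hx]
    constructor <;> nlinarith [mul_nonneg ha.1 hx0, mul_le_mul_of_nonneg_left hx4 ha.1]
  · rw [fab_of_gt hx]
    constructor <;> nlinarith [mul_nonneg hb.1 hx0, mul_le_mul_of_nonneg_left hx4 hb.1]

theorem surjOn_fab (ha : 0 ≤ a) (hb : 0 ≤ b) :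
    SurjOn (fab a b) (Ioc (1/2 - b/4) (1/2 + a/4)) (Ioc (1/2 - b/4) (1/2 + a/4)) := by
  set L := fun x : ℝ => x * (1 + a - a * x)
  set R := fun x : ℝ => x * (1 - b + b * x)
  have hL : Continuous L := by fun_prop
  have hR : Continuous R := by fun_prop
  have hcover : L (1/2 - b/4) ≤ R (1/2 + a/4) := by
    have : R (1/2 + a/4) - L (1/2 - b/4) = a * b * (a + b) / 16 := by simp only [L, R]; ring
    rw [← sub_nonneg, this]
    positivity
  rintro y ⟨hcy, hyd⟩
  rcases lt_or_ge (L (1/2 - b/4)) y with hLy | hyL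
  · obtain ⟨x, ⟨hcx, hx⟩, rfl⟩ :=
      intermediate_value_Ioc (show 1/2 - b/4 ≤ (1/2 : ℝ) by linarith) hL.continuousOn
        ⟨hLy, by simp only [L]; linarith⟩
    exact ⟨x, ⟨hcx, by linarith⟩, fab_of_le hx⟩
  · obtain ⟨x, ⟨hx, hxd⟩, rfl⟩ :=
      intermediate_value_Ioc (show (1/2 : ℝ) ≤ 1/2 + a/4 by linarith) hR.continuousOn
        ⟨by simp only [R]; linarith, hyL.trans hcover⟩
    exact ⟨x, ⟨by linarith, hxd⟩, fab_of_gt hx⟩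

end

theorem stmt6 (a b : ℝ) (ha : a ∈ Set.Ioc (0:ℝ) 1) (hb : b ∈ Set.Ioc (0:ℝ) 1) :
    fab a b '' Set.Ioc (1/2 - b/4) (1/2 + a/4) = Set.Ioc (1/2 - b/4) (1/2 + a/4) := by
  obtain ⟨ha0, ha1⟩ := ha
  obtain ⟨hb0, hb1⟩ := hb
  exact (surjOn_fab ha0.le hb0.le).image_eq_of_mapsTo
    (mapsTo_fab ⟨ha0.le, by linarith⟩ ⟨hb0.le, by linarith⟩)
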